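/- arXiv:1612.08938 — 3 statements merged into one kernel-verified Lean document; each statement's English description precedes it below -/
import Mathlib

section
/- Let ω = (1/4)·[[1,0,0,1],[0,1,1,0],[0,1,1,0],[1,0,0,1]] and let V be the unitary with rows (0,0,1,0), (s,-c,0,0), (c,s,0,0), (0,0,0,-1), where c = cos θ and s = sin θ. Then the partial transpose (with respect to the second qubit) of VωV† is positive semidefinite for all θ. -/
open Matrix

/-- Recombine two indices of `Fin 4` (viewed as two-bit strings `i = (a,b)`,
`j = (c,d)`) into the index `(a,d)`. -/
def mixIdx (i j : Fin 4) : Fin 4 := ⟨2 * (i.val / 2) + j.val % 2, by omega⟩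

/-- Partial transpose with respect to the second qubit of a 4×4 matrix viewed as a
2⊗2 bipartite operator: `(M^Γ)_{(a,b),(c,d)} = M_{(a,d),(c,b)}`. -/
def ptB (M : Matrix (Fin 4) (Fin 4) ℝ) : Matrix (Fin 4) (Fin 4) ℝ :=
  Matrix.of fun i j => M (mixIdx i j) (mixIdx j i)

/-- The state ω of Example 1. -/
noncomputable def omegaMat : Matrix (Fin 4) (Fin 4) ℝ :=
  (1 / 4 : ℝ) • !![1, 0, 0, 1; 0, 1, 1, 0; 0, 1, 1, 0; 1, 0, 0, 1]

/-- The unitary V of Example 1, with c = cos θ and s = sin θ. -/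
noncomputable def Vmat (θ : ℝ) : Matrix (Fin 4) (Fin 4) ℝ :=
  !![0, 0, 1, 0;
     Real.sin θ, -Real.cos θ, 0, 0;
     Real.cos θ, Real.sin θ, 0, 0;
     0, 0, 0, -1]
/-!
Writing `c = cos θ`, `s = sin θ`, one finds `VωV† = (1 + K)/4` for the symmetric matrix `K`
below, and this matrix is fixed by the partial transpose. Since `c² + s² = 1`, `K` is an
involution, so `(1 + K)ᴴ (1 + K) = 2 (1 + K)`: the matrix `1 + K` is a Gram matrix, hence
positive semidefinite.
-/

open scoped ComplexOrder in
theorem posSemidef_one_add_of_mul_self_eq_one {n 𝕜 : Type*} [Fintype n] [DecidableEq n]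
    [RCLike 𝕜] {K : Matrix n n 𝕜} (hK : K.IsHermitian) (hKK : K * K = 1) :
    (1 + K).PosSemidef := by
  have hgram : (1 + K)ᴴ * (1 + K) = (2 : 𝕜) • (1 + K) := by
    rw [conjTranspose_add, conjTranspose_one, hK.eq, add_mul, mul_add, mul_add, hKK, two_smul,
      one_mul, mul_one, one_mul]
    abel
  have hhalf : 1 + K = (2⁻¹ : 𝕜) • ((1 + K)ᴴ * (1 + K)) := by
    rw [hgram, smul_smul, inv_mul_cancel₀ two_ne_zero, one_smul]
  rw [hhalf]
  exact (posSemidef_conjTranspose_mul_self _).smul (by positivity)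

noncomputable def reflMat (θ : ℝ) : Matrix (Fin 4) (Fin 4) ℝ :=
  !![0, -Real.cos θ, Real.sin θ, 0;
     -Real.cos θ, 0, 0, -Real.sin θ;
     Real.sin θ, 0, 0, -Real.cos θ;
     0, -Real.sin θ, -Real.cos θ, 0]

lemma reflMat_isHermitian (θ : ℝ) : (reflMat θ).IsHermitian := by
  ext i j
  fin_cases i <;> fin_cases j <;> simp [reflMat]

lemma reflMat_mul_self (θ : ℝ) : reflMat θ * reflMat θ = 1 := by
  have hsc := Real.sin_sq_add_cos_sq θ
  ext i j
  fin_cases i <;> fin_cases j <;> simp [reflMat, mul_apply, Fin.sum_univ_four] <;> linarith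

lemma Vmat_mul_omegaMat_mul_conjTranspose (θ : ℝ) :
    Vmat θ * omegaMat * (Vmat θ)ᴴ = (1 / 4 : ℝ) • (1 + reflMat θ) := by
  have hsc := Real.sin_sq_add_cos_sq θ
  ext i j
  fin_cases i <;> fin_cases j <;>
    simp [Vmat, omegaMat, reflMat, mul_apply, Fin.sum_univ_four] <;> linarith

lemma ptB_smul (c : ℝ) (M : Matrix (Fin 4) (Fin 4) ℝ) : ptB (c • M) = c • ptB M := rfl

lemma ptB_one_add_reflMat (θ : ℝ) : ptB (1 + reflMat θ) = 1 + reflMat θ := by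
  ext i j
  fin_cases i <;> fin_cases j <;> simp [ptB, mixIdx, reflMat]

/-- the partial transpose (w.r.t. the second qubit) of VωV† is positive
semidefinite for all θ. -/
theorem ptB_V_omega_V_posSemidef (θ : ℝ) :
    (ptB (Vmat θ * omegaMat * (Vmat θ)ᴴ)).PosSemidef := by
  rw [Vmat_mul_omegaMat_mul_conjTranspose, ptB_smul, ptB_one_add_reflMat]
  exact (posSemidef_one_add_of_mul_self_eq_one (reflMat_isHermitian θ)
    (reflMat_mul_self θ)).smul (by norm_num)
end

section
/- Let ω̃ = (1/2)·diag(1,0,0,1) and let V be the unitary with rows (0,0,1,0), (s,-c,0,0), (c,s,0,0), (0,0,0,-1) for c = cos θ, s = sin θ with sin θ·cos θ ≠ 0. Then the partial transpose of Vω̃V† (with respect to the second qubit) is not positive semidefinite. -/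
open Matrix

/-- The separable state ω̃ = (1/2)·diag(1,0,0,1). -/
noncomputable def omegaTilde : Matrix (Fin 4) (Fin 4) ℝ :=
  (1 / 2 : ℝ) • !![1, 0, 0, 0; 0, 0, 0, 0; 0, 0, 0, 0; 0, 0, 0, 1]

/-!
The partial transpose of `V ω̃ V†` has a zero diagonal entry at `|00⟩`, while its `(|00⟩, |11⟩)`
entry is the coherence `sin θ cos θ / 2` between `|01⟩` and `|10⟩` created by `V`. A positive
semidefinite matrix with a zero diagonal entry has the whole row zero, since its `2 × 2`
principal minors are nonnegative.
-/

open scoped ComplexOrder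

theorem Matrix.PosSemidef.norm_apply_sq_le {n 𝕜 : Type*} [RCLike 𝕜] {A : Matrix n n 𝕜}
    (hA : A.PosSemidef) (i j : n) : ‖A i j‖ ^ 2 ≤ RCLike.re (A i i) * RCLike.re (A j j) := by
  have hdet := (hA.submatrix ![i, j]).det_nonneg
  rw [det_fin_two] at hdet
  simp only [submatrix_apply, Matrix.cons_val_zero, Matrix.cons_val_one] at hdet
  rw [← hA.isHermitian.apply j i, RCLike.star_def, RCLike.mul_conj,
    ← hA.isHermitian.coe_re_apply_self i, ← hA.isHermitian.coe_re_apply_self j] at hdet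
  norm_cast at hdet
  exact sub_nonneg.mp (RCLike.ofReal_nonneg.mp hdet)

theorem Matrix.PosSemidef.apply_eq_zero_of_diag_eq_zero {n 𝕜 : Type*} [RCLike 𝕜]
    {A : Matrix n n 𝕜} (hA : A.PosSemidef) {i : n} (hi : A i i = 0) (j : n) : A i j = 0 := by
  have hle := hA.norm_apply_sq_le i j
  rw [hi, map_zero, zero_mul] at hle
  exact norm_eq_zero.mp <| pow_eq_zero_iff two_ne_zero |>.mp <| le_antisymm hle (by positivity)

theorem Vmat_mul_omegaTilde_mul_conjTranspose (θ : ℝ) :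
    Vmat θ * omegaTilde * (Vmat θ)ᴴ = (1 / 2 : ℝ) •
      !![0, 0, 0, 0;
         0, Real.sin θ ^ 2, Real.sin θ * Real.cos θ, 0;
         0, Real.sin θ * Real.cos θ, Real.cos θ ^ 2, 0;
         0, 0, 0, 1] := by
  ext i j
  fin_cases i <;> fin_cases j <;>
    simp [Vmat, omegaTilde, Matrix.mul_apply, Fin.sum_univ_four] <;> ring

theorem ptB_apply_zero_zero (M : Matrix (Fin 4) (Fin 4) ℝ) : ptB M 0 0 = M 0 0 := rfl

theorem ptB_apply_zero_three (M : Matrix (Fin 4) (Fin 4) ℝ) : ptB M 0 3 = M 1 2 := rfl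

/-- if sin θ · cos θ ≠ 0 then the partial transpose (w.r.t. the second
qubit) of Vω̃V† is not positive semidefinite, i.e. V is a nonlocal unitary. -/
theorem ptB_V_omegaTilde_V_not_posSemidef (θ : ℝ) (h : Real.sin θ * Real.cos θ ≠ 0) :
    ¬ (ptB (Vmat θ * omegaTilde * (Vmat θ)ᴴ)).PosSemidef := by
  intro hpsd
  have hdiag : ptB (Vmat θ * omegaTilde * (Vmat θ)ᴴ) 0 0 = 0 := by
    rw [ptB_apply_zero_zero, Vmat_mul_omegaTilde_mul_conjTranspose]
    simp
  have hoff : ptB (Vmat θ * omegaTilde * (Vmat θ)ᴴ) 0 3 = Real.sin θ * Real.cos θ / 2 := by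
    rw [ptB_apply_zero_three, Vmat_mul_omegaTilde_mul_conjTranspose]
    simp [div_eq_inv_mul]
  have hzero := hpsd.apply_eq_zero_of_diag_eq_zero hdiag 3
  rw [hoff] at hzero
  exact h (by linarith)
end

section
/- For density matrices ρ₁, ρ₂ on ℂᵈ with ‖ρ₁ − ρ₂‖₁ = ε ≤ 1/e, the Fannes-type inequality |S(ρ₁) − S(ρ₂)| ≤ ε·log₂ d + η(ε) holds, where S is von Neumann entropy and η(x) = −x·log₂ x. -/
/-!
Let `a↓, b↓` be the eigenvalues of `ρ₁, ρ₂` in decreasing order. With `P = (ρ₁ - ρ₂)⁺`, the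
operator `ρ₂ + P` dominates both states, so by Weyl's monotonicity theorem its ordered eigenvalues
dominate `a↓` and `b↓`; comparing traces gives the Mirsky-type bound `∑ |a↓ₖ - b↓ₖ| ≤ ‖ρ₁ - ρ₂‖₁`.
The rest is scalar, with `η = Real.negMulLog`: for `|a - b| ≤ 1/e` one has
`|η a - η b| ≤ η |a - b|`, Jensen's inequality for the concave `η` gives `∑ η tₖ ≤ T log d + η T` with `T = ∑ tₖ`, and `η` is increasing on `[0, 1/e]`.
-/

open Matrix
open scoped ComplexOrder

/-- The trace norm ‖X‖₁ = Tr √(X†X) of a complex matrix. -/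
noncomputable def traceNorm {m : Type*} [Fintype m] [DecidableEq m]
    (X : Matrix m m ℂ) : ℝ :=
  (((Matrix.posSemidef_conjTranspose_mul_self X).1.eigenvectorUnitary : Matrix m m ℂ) *
      diagonal (((↑) : ℝ → ℂ) ∘ (√·) ∘ (Matrix.posSemidef_conjTranspose_mul_self X).1.eigenvalues) *
      (star (Matrix.posSemidef_conjTranspose_mul_self X).1.eigenvectorUnitary : Matrix m m ℂ)).trace.re

namespace Real

lemma negMulLog_add_le {s t : ℝ} (hs : 0 ≤ s) (ht : 0 ≤ t) :
    negMulLog (s + t) ≤ negMulLog s + negMulLog t := by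
  rcases hs.eq_or_lt with rfl | hs
  · simp
  rcases ht.eq_or_lt with rfl | ht
  · simp
  have hls : log s ≤ log (s + t) := log_le_log hs (by linarith)
  have hlt : log t ≤ log (s + t) := log_le_log ht (by linarith)
  simp only [negMulLog]
  nlinarith [mul_le_mul_of_nonneg_left hls hs.le, mul_le_mul_of_nonneg_left hlt ht.le]

lemma self_le_negMulLog {t : ℝ} (ht : 0 ≤ t) (he : t ≤ exp (-1)) : t ≤ negMulLog t := by
  rcases ht.eq_or_lt with rfl | ht
  · simp
  have hlog : log t ≤ -1 := by simpa using log_le_log ht he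
  simp only [negMulLog]
  nlinarith

lemma negMulLog_sub_negMulLog_add_le {s t : ℝ} (hs : 0 ≤ s) (ht : 0 ≤ t) (hst : s + t ≤ 1)
    (he : t ≤ exp (-1)) : negMulLog s - negMulLog (s + t) ≤ negMulLog t := by
  rcases hs.eq_or_lt with rfl | hs
  · simpa using negMulLog_nonneg ht (by linarith)
  -- `η s - η (s + t) = s log ((s + t) / s) + t log (s + t) ≤ t ≤ η t`
  have hquot : log ((s + t) / s) ≤ (s + t) / s - 1 := log_le_sub_one_of_pos (by positivity)
  rw [log_div (by positivity) hs.ne'] at hquot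
  have hinc : s * (log (s + t) - log s) ≤ t := by
    calc s * (log (s + t) - log s) ≤ s * ((s + t) / s - 1) := by gcongr
      _ = t := by field_simp; ring
  have hneg : t * log (s + t) ≤ 0 :=
    mul_nonpos_of_nonneg_of_nonpos ht (log_nonpos (by positivity) hst)
  have := self_le_negMulLog ht he
  simp only [negMulLog] at this ⊢
  nlinarith

lemma abs_negMulLog_sub_le {a b : ℝ} (ha : 0 ≤ a) (hb : 0 ≤ b) (ha1 : a ≤ 1) (hb1 : b ≤ 1)
    (he : |a - b| ≤ exp (-1)) : |negMulLog a - negMulLog b| ≤ negMulLog |a - b| := by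
  wlog hba : b ≤ a generalizing a b
  · rw [abs_sub_comm, abs_sub_comm a]
    exact this hb ha hb1 ha1 (abs_sub_comm a b ▸ he) (le_of_not_ge hba)
  rw [abs_of_nonneg (sub_nonneg.2 hba)] at he ⊢
  have hsum : b + (a - b) = a := add_sub_cancel b a
  have hup := negMulLog_add_le hb (sub_nonneg.2 hba)
  have hlow := negMulLog_sub_negMulLog_add_le hb (sub_nonneg.2 hba) (by linarith) he
  rw [hsum] at hup hlow
  rw [abs_sub_le_iff]
  constructor <;> linarith

lemma monotoneOn_negMulLog : MonotoneOn negMulLog (Set.Icc 0 (exp (-1))) := by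
  refine monotoneOn_of_deriv_nonneg (convex_Icc _ _) continuous_negMulLog.continuousOn
    (differentiableOn_negMulLog.mono fun x hx => ?_) fun x hx => ?_
  · rw [interior_Icc] at hx
    exact hx.1.ne'
  · rw [interior_Icc] at hx
    rw [deriv_negMulLog hx.1.ne']
    have : log x ≤ -1 := by simpa using log_le_log hx.1 hx.2.le
    linarith

/-- Jensen for the concave `η` with uniform weights, and `η (T / d) = η T / d + T log d / d`. -/
lemma sum_negMulLog_le {ι : Type*} [Fintype ι] (t : ι → ℝ) (ht : ∀ i, 0 ≤ t i) :
    ∑ i, negMulLog (t i) ≤ (∑ i, t i) * log (Fintype.card ι) + negMulLog (∑ i, t i) := by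
  rcases isEmpty_or_nonempty ι with hι | hι
  · simp
  have hd : (0 : ℝ) < Fintype.card ι := by exact_mod_cast Fintype.card_pos
  have hjensen := concaveOn_negMulLog.le_map_sum (t := Finset.univ)
    (w := fun _ => (Fintype.card ι : ℝ)⁻¹) (p := t) (fun _ _ => by positivity)
    (by simp [hd.ne']) (fun i _ => ht i)
  simp only [smul_eq_mul, ← Finset.mul_sum] at hjensen
  rw [mul_comm, negMulLog_mul, negMulLog, log_inv] at hjensen
  have := mul_le_mul_of_nonneg_left hjensen hd.le
  field_simp at this
  linarith

lemma abs_sum_negMulLog_sub_le {ι : Type*} [Fintype ι] {a b : ι → ℝ}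
    (ha : ∀ i, a i ∈ Set.Icc 0 1) (hb : ∀ i, b i ∈ Set.Icc 0 1) {ε : ℝ}
    (hab : ∑ i, |a i - b i| ≤ ε) (hε : ε ≤ exp (-1)) :
    |∑ i, negMulLog (a i) - ∑ i, negMulLog (b i)| ≤
      ε * log (Fintype.card ι) + negMulLog ε := by
  have hT : 0 ≤ ∑ i, |a i - b i| := Finset.sum_nonneg fun i _ => abs_nonneg _
  have ht : ∀ i, |a i - b i| ≤ exp (-1) := fun i =>
    ((Finset.single_le_sum (fun j _ => abs_nonneg (a j - b j)) (Finset.mem_univ i)).trans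
      hab).trans hε
  calc |∑ i, negMulLog (a i) - ∑ i, negMulLog (b i)|
      ≤ ∑ i, |negMulLog (a i) - negMulLog (b i)| := by
        rw [← Finset.sum_sub_distrib]
        exact Finset.abs_sum_le_sum_abs _ _
    _ ≤ ∑ i, negMulLog |a i - b i| := Finset.sum_le_sum fun i _ =>
        abs_negMulLog_sub_le (ha i).1 (hb i).1 (ha i).2 (hb i).2 (ht i)
    _ ≤ (∑ i, |a i - b i|) * log (Fintype.card ι) + negMulLog (∑ i, |a i - b i|) :=
        sum_negMulLog_le _ fun i => abs_nonneg _
    _ ≤ ε * log (Fintype.card ι) + negMulLog ε :=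
        add_le_add (mul_le_mul_of_nonneg_right hab (log_natCast_nonneg _))
          (monotoneOn_negMulLog ⟨hT, hab.trans hε⟩ ⟨hT.trans hab, hε⟩ hab)


end Real

open Module Submodule
open scoped InnerProductSpace

lemma Submodule.exists_mem_inf_ne_zero_of_finrank_lt {K V : Type*} [DivisionRing K]
    [AddCommGroup V] [Module K V] [FiniteDimensional K V] {U W : Submodule K V}
    (h : finrank K V < finrank K U + finrank K W) : ∃ x ∈ U ⊓ W, x ≠ 0 := by
  rw [← Submodule.ne_bot_iff, ne_eq, ← disjoint_iff]
  exact fun hUW => h.not_ge (finrank_add_finrank_le_of_disjoint hUW)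

namespace OrthonormalBasis

variable {ι 𝕜 E : Type*} [Fintype ι] [RCLike 𝕜] [NormedAddCommGroup E] [InnerProductSpace 𝕜 E]

lemma finrank_span_image (b : OrthonormalBasis ι 𝕜 E) (s : Finset ι) :
    finrank 𝕜 (span 𝕜 (b '' s)) = s.card := by
  rw [Set.image_eq_range, ← Fintype.card_coe s]
  exact finrank_span_eq_card (b.orthonormal.linearIndependent.comp _ Subtype.val_injective)

lemma inner_eq_zero_of_mem_span_image (b : OrthonormalBasis ι 𝕜 E) {s : Set ι} {x : E}
    (hx : x ∈ span 𝕜 (b '' s)) {i : ι} (hi : i ∉ s) : ⟪b i, x⟫_𝕜 = 0 := by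
  rw [← b.coe_toBasis] at hx
  by_contra h
  exact hi (b.toBasis.repr_support_subset_of_mem_span s hx (by simpa [b.repr_apply_apply] using h))

end OrthonormalBasis

namespace LinearMap.IsSymmetric

variable {𝕜 E : Type*} [RCLike 𝕜] [NormedAddCommGroup E] [InnerProductSpace 𝕜 E]
  [FiniteDimensional 𝕜 E] {T S : E →ₗ[𝕜] E} {n : ℕ} (hn : finrank 𝕜 E = n)

lemma re_inner_apply_self_eq_sum (hT : T.IsSymmetric) (x : E) :
    RCLike.re ⟪T x, x⟫_𝕜 =
      ∑ i, hT.eigenvalues hn i * ‖⟪hT.eigenvectorBasis hn i, x⟫_𝕜‖ ^ 2 := by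
  rw [← (hT.eigenvectorBasis hn).sum_inner_mul_inner, map_sum]
  congr! 1 with i
  rw [hT, hT.apply_eigenvectorBasis, inner_smul_right, ← inner_conj_symm, mul_assoc,
    RCLike.conj_mul]
  norm_cast

lemma mul_norm_sq_le_re_inner_apply_self (hT : T.IsSymmetric) {c : ℝ} {s : Set (Fin n)}
    (hc : ∀ i ∈ s, c ≤ hT.eigenvalues hn i) {x : E}
    (hx : x ∈ span 𝕜 (hT.eigenvectorBasis hn '' s)) :
    c * ‖x‖ ^ 2 ≤ RCLike.re ⟪T x, x⟫_𝕜 := by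
  rw [hT.re_inner_apply_self_eq_sum hn, ← (hT.eigenvectorBasis hn).sum_sq_norm_inner_right,
    Finset.mul_sum]
  refine Finset.sum_le_sum fun i _ => ?_
  by_cases hi : i ∈ s
  · exact mul_le_mul_of_nonneg_right (hc i hi) (by positivity)
  · simp [(hT.eigenvectorBasis hn).inner_eq_zero_of_mem_span_image hx hi]

lemma re_inner_apply_self_le_mul_norm_sq (hT : T.IsSymmetric) {c : ℝ} {s : Set (Fin n)}
    (hc : ∀ i ∈ s, hT.eigenvalues hn i ≤ c) {x : E}
    (hx : x ∈ span 𝕜 (hT.eigenvectorBasis hn '' s)) :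
    RCLike.re ⟪T x, x⟫_𝕜 ≤ c * ‖x‖ ^ 2 := by
  rw [hT.re_inner_apply_self_eq_sum hn, ← (hT.eigenvectorBasis hn).sum_sq_norm_inner_right,
    Finset.mul_sum]
  refine Finset.sum_le_sum fun i _ => ?_
  by_cases hi : i ∈ s
  · exact mul_le_mul_of_nonneg_right (hc i hi) (by positivity)
  · simp [(hT.eigenvectorBasis hn).inner_eq_zero_of_mem_span_image hx hi]

theorem eigenvalues_le_of_le (hT : T.IsSymmetric) (hS : S.IsSymmetric) (hTS : T ≤ S)
    (k : Fin n) : hT.eigenvalues hn k ≤ hS.eigenvalues hn k := by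
  -- the top `k + 1` eigenvectors of `T` and the bottom `n - k` eigenvectors of `S` span
  -- subspaces that meet; compare the quadratic forms on a common nonzero vector
  obtain ⟨x, ⟨hxT, hxS⟩, hx⟩ := exists_mem_inf_ne_zero_of_finrank_lt
    (U := span 𝕜 (hT.eigenvectorBasis hn '' (Finset.Iic k : Set (Fin n))))
    (W := span 𝕜 (hS.eigenvectorBasis hn '' (Finset.Ici k : Set (Fin n)))) (by
      rw [OrthonormalBasis.finrank_span_image, OrthonormalBasis.finrank_span_image,
        Fin.card_Iic, Fin.card_Ici, hn]
      omega)
  have hlow := hT.mul_norm_sq_le_re_inner_apply_self hn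
    (fun i hi => hT.eigenvalues_antitone hn (Finset.mem_Iic.1 hi)) hxT
  have hup := hS.re_inner_apply_self_le_mul_norm_sq hn
    (fun i hi => hS.eigenvalues_antitone hn (Finset.mem_Ici.1 hi)) hxS
  have hmid : RCLike.re ⟪T x, x⟫_𝕜 ≤ RCLike.re ⟪S x, x⟫_𝕜 := by
    have := hTS.re_inner_nonneg_left x
    rwa [sub_apply, inner_sub_left, map_sub, sub_nonneg] at this
  exact le_of_mul_le_mul_right (hlow.trans (hmid.trans hup)) (by positivity)

end LinearMap.IsSymmetric

open scoped MatrixOrder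

namespace Matrix.IsHermitian

variable {𝕜 n : Type*} [RCLike 𝕜] [Fintype n] [DecidableEq n] {A B : Matrix n n 𝕜}

theorem eigenvalues₀_le_of_le (hA : A.IsHermitian) (hB : B.IsHermitian) (hAB : A ≤ B)
    (k : Fin (Fintype.card n)) : hA.eigenvalues₀ k ≤ hB.eigenvalues₀ k :=
  LinearMap.IsSymmetric.eigenvalues_le_of_le _ _ _ (by
    rw [LinearMap.le_def, ← map_sub, isPositive_toEuclideanLin_iff]
    exact hAB) k

lemma sum_comp_eigenvalues₀ {M : Type*} [AddCommMonoid M] (hA : A.IsHermitian) (f : ℝ → M) :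
    ∑ k, f (hA.eigenvalues₀ k) = ∑ i, f (hA.eigenvalues i) :=
  (Equiv.sum_comp _ (fun k => f (hA.eigenvalues₀ k))).symm

lemma sum_eigenvalues₀ (hA : A.IsHermitian) : ∑ k, hA.eigenvalues₀ k = RCLike.re A.trace := by
  rw [hA.sum_comp_eigenvalues₀ (fun x => x), hA.trace_eq_sum_eigenvalues, map_sum]
  simp

lemma trace_cfc (hA : A.IsHermitian) (f : ℝ → ℝ) :
    (cfc f A).trace = ∑ i, (f (hA.eigenvalues i) : 𝕜) := by
  rw [hA.cfc_eq, IsHermitian.cfc, Unitary.conjStarAlgAut_apply, trace_mul_cycle,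
    Unitary.coe_star_mul_self, one_mul, trace_diagonal]
  rfl

section Complex

variable {A B : Matrix n n ℂ}

lemma traceNorm_eq_sum_abs_eigenvalues (hA : A.IsHermitian) :
    traceNorm A = ∑ i, |hA.eigenvalues i| := by
  have hAA : Aᴴ * A = cfc (fun x : ℝ => x * x) A := by
    rw [cfc_mul (fun x : ℝ => x) (fun x : ℝ => x) A, cfc_id' ℝ A, hA.eq]
  have hsqrt : traceNorm A = RCLike.re (cfc Real.sqrt (Aᴴ * A)).trace := by
    rw [(posSemidef_conjTranspose_mul_self A).1.cfc_eq, IsHermitian.cfc,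
      Unitary.conjStarAlgAut_apply]
    rfl
  rw [hsqrt, hAA, ← cfc_comp' Real.sqrt (fun x : ℝ => x * x) A,
    cfc_congr (g := fun x => |x|) fun x _ => Real.sqrt_mul_self_eq_abs x, hA.trace_cfc,
    map_sum]
  simp

theorem sum_abs_eigenvalues₀_sub_le_traceNorm (hA : A.IsHermitian) (hB : B.IsHermitian) :
    ∑ k, |hA.eigenvalues₀ k - hB.eigenvalues₀ k| ≤ traceNorm (A - B) := by
  have hAB := hA.sub hB
  set P := cfc (fun x : ℝ => max x 0) (A - B)
  set N := cfc (fun x : ℝ => max (-x) 0) (A - B)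
  have hPN : P - N = A - B := by
    rw [← cfc_sub _ _ (A - B)]
    simp only [max_zero_sub_max_neg_zero_eq_self]
    exact cfc_id' ℝ (A - B)
  have hN : 0 ≤ N := cfc_nonneg fun x _ => le_max_right _ _
  have hP : 0 ≤ P := cfc_nonneg fun x _ => le_max_right _ _
  have hV : (B + P).IsHermitian := hB.add (cfc_predicate _ _)
  have hVA : B + P - A = N := by
    calc B + P - A = P - (A - B) := by abel
      _ = N := by rw [← hPN]; abel
  have hAV : A ≤ B + P := by rwa [← sub_nonneg, hVA]
  have hBV : B ≤ B + P := le_add_of_nonneg_right hP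
  calc ∑ k, |hA.eigenvalues₀ k - hB.eigenvalues₀ k|
      ≤ ∑ k, ((hV.eigenvalues₀ k - hA.eigenvalues₀ k) +
          (hV.eigenvalues₀ k - hB.eigenvalues₀ k)) := by
        refine Finset.sum_le_sum fun k _ => abs_sub_le_iff.2 ⟨?_, ?_⟩ <;>
          linarith [hA.eigenvalues₀_le_of_le hV hAV k, hB.eigenvalues₀_le_of_le hV hBV k]
    _ = RCLike.re N.trace + RCLike.re P.trace := by
        simp only [Finset.sum_add_distrib, Finset.sum_sub_distrib, IsHermitian.sum_eigenvalues₀,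
          ← map_sub, ← trace_sub, hVA, add_sub_cancel_left]
    _ = ∑ i, |hAB.eigenvalues i| := by
        rw [hAB.trace_cfc, hAB.trace_cfc, ← map_add, ← Finset.sum_add_distrib, map_sum]
        refine Finset.sum_congr rfl fun i _ => ?_
        rw [← RCLike.ofReal_add, RCLike.ofReal_re, add_comm,
          max_zero_add_max_neg_zero_eq_abs_self]
    _ = traceNorm (A - B) := hAB.traceNorm_eq_sum_abs_eigenvalues.symm

end Complex

end Matrix.IsHermitian

namespace Matrix.PosSemidef

variable {n : Type*} [Fintype n] [DecidableEq n] {A B : Matrix n n ℂ}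

lemma eigenvalues₀_mem_Icc (hA : A.PosSemidef) (htr : A.trace = 1) (k : Fin (Fintype.card n)) :
    hA.1.eigenvalues₀ k ∈ Set.Icc 0 1 := by
  have hnonneg : ∀ j, 0 ≤ hA.1.eigenvalues₀ j := fun j => by
    simpa [IsHermitian.eigenvalues] using
      hA.eigenvalues_nonneg (Fintype.equivOfCardEq (Fintype.card_fin _) j)
  refine ⟨hnonneg k, ?_⟩
  calc hA.1.eigenvalues₀ k ≤ ∑ j, hA.1.eigenvalues₀ j :=
        Finset.single_le_sum (fun j _ => hnonneg j) (Finset.mem_univ k)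
    _ = 1 := by rw [hA.1.sum_eigenvalues₀, htr, RCLike.one_re]

theorem abs_sum_negMulLog_eigenvalues_sub_le (hA : A.PosSemidef) (hB : B.PosSemidef)
    (htrA : A.trace = 1) (htrB : B.trace = 1) (hε : traceNorm (A - B) ≤ Real.exp (-1)) :
    |∑ i, Real.negMulLog (hA.1.eigenvalues i) - ∑ i, Real.negMulLog (hB.1.eigenvalues i)| ≤
      traceNorm (A - B) * Real.log (Fintype.card n) + Real.negMulLog (traceNorm (A - B)) := by
  rw [← hA.1.sum_comp_eigenvalues₀, ← hB.1.sum_comp_eigenvalues₀]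
  simpa only [Fintype.card_fin] using Real.abs_sum_negMulLog_sub_le
    (hA.eigenvalues₀_mem_Icc htrA) (hB.eigenvalues₀_mem_Icc htrB)
    (hA.1.sum_abs_eigenvalues₀_sub_le_traceNorm hB.1) hε

end Matrix.PosSemidef

theorem fannes_inequality_general (d : ℕ)
    (ρ₁ ρ₂ : Matrix (Fin d) (Fin d) ℂ)
    (h₁ : ρ₁.PosSemidef) (htr₁ : ρ₁.trace = 1)
    (h₂ : ρ₂.PosSemidef) (htr₂ : ρ₂.trace = 1)
    (ε : ℝ) (hε : ε = traceNorm (ρ₁ - ρ₂)) (hε' : ε ≤ (Real.exp 1)⁻¹) :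
    |(-∑ i, h₁.1.eigenvalues i * Real.logb 2 (h₁.1.eigenvalues i))
      - (-∑ i, h₂.1.eigenvalues i * Real.logb 2 (h₂.1.eigenvalues i))|
    ≤ ε * Real.logb 2 d + (-ε * Real.logb 2 ε) := by
  have hfannes := h₁.abs_sum_negMulLog_eigenvalues_sub_le h₂ htr₁ htr₂
    (by rwa [Real.exp_neg, ← hε])
  rw [← hε, Fintype.card_fin] at hfannes
  have hlog2 : 0 < Real.log 2 := Real.log_pos one_lt_two
  have hentropy (f : Fin d → ℝ) :
      -∑ i, f i * Real.logb 2 (f i) = (∑ i, Real.negMulLog (f i)) / Real.log 2 := by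
    rw [Finset.sum_div, ← Finset.sum_neg_distrib]
    refine Finset.sum_congr rfl fun i _ => ?_
    rw [Real.logb, Real.negMulLog]
    ring
  have hbound : ε * Real.logb 2 d + -ε * Real.logb 2 ε =
      (ε * Real.log d + Real.negMulLog ε) / Real.log 2 := by
    rw [Real.logb, Real.logb, Real.negMulLog]
    ring
  rw [hentropy, hentropy, ← sub_div, abs_div, abs_of_pos hlog2, hbound]
  exact div_le_div_of_nonneg_right hfannes hlog2.le

/-- Fannes inequality. For density matrices ρ₁, ρ₂ on ℂ^d with
`‖ρ₁ − ρ₂‖₁ = ε ≤ 1/e`, we have `|S(ρ₁) − S(ρ₂)| ≤ ε·log₂ d + η(ε)`, where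
`S(ρ) = −∑ᵢ λᵢ·log₂ λᵢ` (von Neumann entropy expressed via the eigenvalues of ρ)
and `η(x) = −x·log₂ x`. -/
theorem fannes_inequality (d : ℕ) (hd : 1 ≤ d)
    (ρ₁ ρ₂ : Matrix (Fin d) (Fin d) ℂ)
    (h₁ : ρ₁.PosSemidef) (htr₁ : ρ₁.trace = 1)
    (h₂ : ρ₂.PosSemidef) (htr₂ : ρ₂.trace = 1)
    (ε : ℝ) (hε : ε = traceNorm (ρ₁ - ρ₂)) (hε' : ε ≤ (Real.exp 1)⁻¹) :
    |(-∑ i, h₁.1.eigenvalues i * Real.logb 2 (h₁.1.eigenvalues i))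
      - (-∑ i, h₂.1.eigenvalues i * Real.logb 2 (h₂.1.eigenvalues i))|
    ≤ ε * Real.logb 2 d + (-ε * Real.logb 2 ε) :=
  fannes_inequality_general d ρ₁ ρ₂ h₁ htr₁ h₂ htr₂ ε hε hε'
end
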